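/- arXiv:1809.10145 — 3 statements merged into one kernel-verified Lean document; each statement's English description precedes it below -/
import Mathlib

section
/- For every integer n ≥ 0 and every subset B ⊆ X, the probability that ε contains two disjoint level-n chunks each contained in B is at most the square of the probability that ε contains a level-n chunk contained in B. -/
open scoped ENNReal

/-- A level-`n` chunk of the error configuration `ε`. -/
def IsChunk {X : Type*} [MetricSpace X] (Q : ℝ) (ε : Set X) : ℕ → Set X → Prop
  | 0, C => ∃ x ∈ ε, C = {x}
  | n + 1, C => ∃ A B : Set X, IsChunk Q ε n A ∧ IsChunk Q ε n B ∧ Disjoint A B ∧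
      C = A ∪ B ∧ Metric.diam C ≤ Q ^ (n + 1) / 2

/-- The Bernoulli(`p`) product measure: each point of `X` is included in the random subset
independently with probability `p` (for `p ∈ [0,1]`); a random subset is encoded as its
indicator function `f : X → Bool`, the subset being `{x | f x = true}`. -/
noncomputable def bernoulliProduct (X : Type*) [Fintype X] (p : ℝ) :
    MeasureTheory.Measure (X → Bool) :=
  MeasureTheory.Measure.pi fun _ =>
    (PMF.bernoulli (min (Real.toNNReal p) 1) (min_le_right _ _)).toMeasure


/-!
The chunk events are increasing events witnessed by the family `𝒮` of level-`n` chunks inside `B`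
(a chunk of `ε` is exactly a subset of `ε` that is a chunk of itself), so the claim is the
van den Berg–Kesten inequality `P(A □ A) ≤ P(A)²` for the increasing event `A`.

It is proved by interpolation. Take two independent configurations `f, g` and, for `K ⊆ X`, let
`E_K` be the event that `𝒮` has two disjoint witnesses, the first present in `f` and the second
in the configuration that reads `g` on `K` and `f` off `K`. Then `P(E_∅) = P(A □ A)` and
`E_X ⊆ A × A`. Adding a point `j` to `K` does not decrease `P(E_K)`: swapping the `j`-th
coordinates of `f` and `g` preserves the product measure, and on each orbit of this swap the
indicator of `E_{K ∪ {j}}` dominates that of `E_K`, because two disjoint witnesses cannot both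
use `j`.
-/

open Function Finset MeasureTheory

section Witness

variable {X : Type*} (𝒮 : Set (Set X))

def Occurs (f : X → Bool) : Prop := ∃ S ∈ 𝒮, S ⊆ {x | f x = true}

def OccursDisjointly (f g : X → Bool) : Prop :=
  ∃ S₁ ∈ 𝒮, ∃ S₂ ∈ 𝒮, Disjoint S₁ S₂ ∧ S₁ ⊆ {x | f x = true} ∧ S₂ ⊆ {x | g x = true}

variable {𝒮}

theorem setOf_eq_true_mono {f g : X → Bool} (h : f ≤ g) :
    {x | f x = true} ⊆ {x | g x = true} := fun x (hx : f x = true) =>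
  le_antisymm (Bool.le_true _) (hx ▸ h x)

theorem subset_setOf_update_eq_true [DecidableEq X] {S : Set X} {f : X → Bool} {j : X}
    (hj : j ∉ S) (hS : S ⊆ {x | f x = true}) (c : Bool) :
    S ⊆ {x | update f j c x = true} := fun x hx => by
  show update f j c x = true
  rw [update_of_ne (ne_of_mem_of_not_mem hx hj)]
  exact hS hx

theorem OccursDisjointly.mono {f f' g g' : X → Bool} (hf : f ≤ f') (hg : g ≤ g')
    (h : OccursDisjointly 𝒮 f g) : OccursDisjointly 𝒮 f' g' :=
  let ⟨S₁, hS₁, S₂, hS₂, hd, h₁, h₂⟩ := h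
  ⟨S₁, hS₁, S₂, hS₂, hd, h₁.trans (setOf_eq_true_mono hf), h₂.trans (setOf_eq_true_mono hg)⟩

theorem OccursDisjointly.occurs {f g : X → Bool} (h : OccursDisjointly 𝒮 f g) :
    Occurs 𝒮 f ∧ Occurs 𝒮 g :=
  let ⟨S₁, hS₁, S₂, hS₂, _, h₁, h₂⟩ := h
  ⟨⟨S₁, hS₁, h₁⟩, ⟨S₂, hS₂, h₂⟩⟩

theorem OccursDisjointly.update_false [DecidableEq X] {f g : X → Bool}
    (h : OccursDisjointly 𝒮 f g) (j : X) :
    OccursDisjointly 𝒮 (update f j false) g ∨ OccursDisjointly 𝒮 f (update g j false) := by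
  obtain ⟨S₁, hS₁, S₂, hS₂, hd, h₁, h₂⟩ := h
  by_cases hj : j ∈ S₁
  · exact .inr ⟨S₁, hS₁, S₂, hS₂, hd, h₁,
      subset_setOf_update_eq_true (Set.disjoint_left.1 hd hj) h₂ false⟩
  · exact .inl ⟨S₁, hS₁, S₂, hS₂, hd, subset_setOf_update_eq_true hj h₁ false, h₂⟩

end Witness

open scoped Classical in
noncomputable def propIndicator (P : Prop) : ℝ≥0∞ := if P then 1 else 0

theorem propIndicator_le_mul {P R S : Prop} (h : P → R ∧ S) :
    propIndicator P ≤ propIndicator R * propIndicator S := by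
  by_cases hP : P
  · simp [propIndicator, hP, h hP]
  · simp [propIndicator, hP]

theorem propIndicator_add_le_of_split {V : Bool → Bool → Prop}
    (hV₁ : ∀ β, V false β → V true β) (hV₂ : ∀ α, V α false → V α true)
    (hsplit : V true true → V false true ∨ V true false) (a b : Bool) :
    propIndicator (V a a) + propIndicator (V b b) ≤
      propIndicator (V a b) + propIndicator (V b a) := by
  have key : propIndicator (V false false) + propIndicator (V true true) ≤
      propIndicator (V false true) + propIndicator (V true false) := by
    by_cases h₀ : V false false
    · simp [propIndicator, h₀, hV₁ _ h₀, hV₂ _ h₀, hV₁ _ (hV₂ _ h₀)]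
    · by_cases h₁ : V true true
      · rcases hsplit h₁ with h | h <;> simp [propIndicator, h₀, h₁, h]
      · simp [propIndicator, h₀, h₁]
  cases a <;> cases b
  · exact le_rfl
  · exact key
  · simpa only [add_comm] using key
  · exact le_rfl

theorem sum_mul_le_sum_mul_of_involutive {α : Type*} [Fintype α] {σ : α → α}
    (hσ : Involutive σ) {w u v : α → ℝ≥0∞} (hw : ∀ q, w (σ q) = w q)
    (huv : ∀ q, u q + u (σ q) ≤ v q + v (σ q)) :
    ∑ q, w q * u q ≤ ∑ q, w q * v q := by
  have hsym : ∀ t : α → ℝ≥0∞, ∑ q, w q * t q = ∑ q, w q * t (σ q) := fun t =>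
    (Equiv.sum_comp hσ.toPerm (fun q => w q * t q)).symm.trans
      (Finset.sum_congr rfl fun q _ => by simp [hw])
  have hdouble : ∀ t : α → ℝ≥0∞, 2 * ∑ q, w q * t q = ∑ q, w q * (t q + t (σ q)) := fun t => by
    simp only [two_mul, mul_add, Finset.sum_add_distrib, ← hsym]
  rw [← ENNReal.mul_le_mul_iff_right two_ne_zero ENNReal.ofNat_ne_top, hdouble, hdouble]
  exact Finset.sum_le_sum fun q _ => mul_le_mul_right (huv q) _

section ProductWeight

variable {X β : Type*} [DecidableEq X]

def swapAt (j : X) (q : (X → β) × (X → β)) : (X → β) × (X → β) :=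
  (update q.1 j (q.2 j), update q.2 j (q.1 j))

theorem swapAt_involutive (j : X) : Involutive (swapAt (β := β) j) := fun q => by
  simp [swapAt]

variable [Fintype X]

noncomputable def prodWeight (b : X → β → ℝ≥0∞) (f : X → β) : ℝ≥0∞ := ∏ x, b x (f x)

theorem prodWeight_update (b : X → β → ℝ≥0∞) (f : X → β) (j : X) (c : β) :
    prodWeight b (update f j c) = b j c * ∏ x ∈ {j}ᶜ, b x (f x) := by
  simp only [prodWeight, apply_update (fun x => b x), Finset.prod_update_of_mem (mem_univ j)]
  rfl

theorem prodWeight_eq_mul_prod_compl (b : X → β → ℝ≥0∞) (f : X → β) (j : X) :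
    prodWeight b f = b j (f j) * ∏ x ∈ {j}ᶜ, b x (f x) := by
  rw [← prodWeight_update, update_eq_self]

theorem prodWeight_swapAt (b : X → β → ℝ≥0∞) (j : X) (q : (X → β) × (X → β)) :
    prodWeight b (swapAt j q).1 * prodWeight b (swapAt j q).2 =
      prodWeight b q.1 * prodWeight b q.2 := by
  simp only [swapAt, prodWeight_update, prodWeight_eq_mul_prod_compl b q.1 j,
    prodWeight_eq_mul_prod_compl b q.2 j]
  ring

end ProductWeight

section Interpolation

variable {X : Type*} [DecidableEq X] (𝒮 : Set (Set X))

theorem piecewise_update_of_notMem {β : Type*} {K : Finset X} {j : X} (hj : j ∉ K)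
    (f g : X → β) (a b : β) :
    K.piecewise (update g j a) (update f j b) = update (K.piecewise g f) j b := by
  rw [K.update_piecewise_of_notMem (f := g) (g := f) hj b]
  exact K.piecewise_congr (fun i hi => update_of_ne (ne_of_mem_of_not_mem hi hj) ..)
    fun _ _ => rfl

-- The second witness reads the coordinates in `K` from the independent copy: this interpolates
-- between `A □ A` (at `K = ∅`) and `A × A` (at `K = univ`).
def OccursDisjointlyOn (K : Finset X) (q : (X → Bool) × (X → Bool)) : Prop :=
  OccursDisjointly 𝒮 q.1 (K.piecewise q.2 q.1)

variable {𝒮}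

theorem propIndicator_occursDisjointlyOn_insert {K : Finset X} {j : X} (hj : j ∉ K)
    (q : (X → Bool) × (X → Bool)) :
    propIndicator (OccursDisjointlyOn 𝒮 K q) +
        propIndicator (OccursDisjointlyOn 𝒮 K (swapAt j q)) ≤
      propIndicator (OccursDisjointlyOn 𝒮 (insert j K) q) +
        propIndicator (OccursDisjointlyOn 𝒮 (insert j K) (swapAt j q)) := by
  obtain ⟨f, g⟩ := q
  set m := K.piecewise g f
  -- the four events differ only in the `j`-th coordinates of the two configurations
  let V (α β : Bool) : Prop := OccursDisjointly 𝒮 (update f j α) (update m j β)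
  have hm : update m j (f j) = m := update_eq_self_iff.2 (K.piecewise_eq_of_notMem _ _ hj).symm
  have h₁ : OccursDisjointlyOn 𝒮 K (f, g) = V (f j) (f j) := by
    simp only [OccursDisjointlyOn, V, update_eq_self, hm, m]
  have h₂ : OccursDisjointlyOn 𝒮 K (swapAt j (f, g)) = V (g j) (g j) := by
    simp only [OccursDisjointlyOn, V, swapAt, piecewise_update_of_notMem hj, m]
  have h₃ : OccursDisjointlyOn 𝒮 (insert j K) (f, g) = V (f j) (g j) := by
    simp only [OccursDisjointlyOn, V, update_eq_self, piecewise_insert, m]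
  have h₄ : OccursDisjointlyOn 𝒮 (insert j K) (swapAt j (f, g)) = V (g j) (f j) := by
    simp only [OccursDisjointlyOn, V, swapAt, piecewise_insert, piecewise_update_of_notMem hj,
      update_self, update_idem, m]
  rw [h₁, h₂, h₃, h₄]
  refine propIndicator_add_le_of_split (fun β => ?_) (fun α => ?_) (fun h => ?_) _ _
  · exact OccursDisjointly.mono (update_mono (Bool.false_le true)) le_rfl
  · exact OccursDisjointly.mono le_rfl (update_mono (Bool.false_le true))
  · simpa only [V, update_idem] using h.update_false j

end Interpolation

section BergKesten

variable {X : Type*} [Fintype X] [DecidableEq X] (b : X → Bool → ℝ≥0∞) (𝒮 : Set (Set X))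

theorem sum_propIndicator_occursDisjointlyOn_empty_le (K : Finset X) :
    ∑ q : (X → Bool) × (X → Bool),
        prodWeight b q.1 * prodWeight b q.2 * propIndicator (OccursDisjointlyOn 𝒮 ∅ q) ≤
      ∑ q : (X → Bool) × (X → Bool),
        prodWeight b q.1 * prodWeight b q.2 * propIndicator (OccursDisjointlyOn 𝒮 K q) := by
  induction K using Finset.induction_on with
  | empty => exact le_rfl
  | insert j K hj ih =>
    exact ih.trans <| sum_mul_le_sum_mul_of_involutive (swapAt_involutive j)
      (prodWeight_swapAt b j) (propIndicator_occursDisjointlyOn_insert hj)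

theorem sum_prodWeight_occursDisjointly_mul_le :
    (∑ f, prodWeight b f * propIndicator (OccursDisjointly 𝒮 f f)) * ∑ g, prodWeight b g ≤
      (∑ f, prodWeight b f * propIndicator (Occurs 𝒮 f)) ^ 2 :=
  calc _ = ∑ q : (X → Bool) × (X → Bool),
        prodWeight b q.1 * prodWeight b q.2 * propIndicator (OccursDisjointlyOn 𝒮 ∅ q) := by
        simp only [Fintype.sum_mul_sum, Fintype.sum_prod_type, OccursDisjointlyOn,
          piecewise_empty, mul_right_comm]
    _ ≤ ∑ q : (X → Bool) × (X → Bool),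
        prodWeight b q.1 * prodWeight b q.2 * propIndicator (OccursDisjointlyOn 𝒮 univ q) :=
      sum_propIndicator_occursDisjointlyOn_empty_le b 𝒮 univ
    _ ≤ ∑ q : (X → Bool) × (X → Bool), prodWeight b q.1 * propIndicator (Occurs 𝒮 q.1) *
        (prodWeight b q.2 * propIndicator (Occurs 𝒮 q.2)) := by
      refine Finset.sum_le_sum fun q _ => ?_
      rw [mul_mul_mul_comm, OccursDisjointlyOn, piecewise_univ]
      exact mul_le_mul_right (propIndicator_le_mul OccursDisjointly.occurs) _
    _ = _ := by rw [sq, Fintype.sum_mul_sum, Fintype.sum_prod_type]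

theorem pi_toMeasure_setOf_eq_sum (π : X → PMF Bool) (P : (X → Bool) → Prop) :
    Measure.pi (fun x => (π x).toMeasure) {f | P f} =
      ∑ f, prodWeight (fun x => π x) f * propIndicator (P f) := by
  classical
  rw [← Set.coe_toFinset {f | P f}, ← sum_measure_singleton, Set.toFinset_ofPred,
    Finset.sum_filter]
  refine Finset.sum_congr rfl fun f _ => ?_
  by_cases hf : P f
  · simp [hf, propIndicator, prodWeight]
  · simp [hf, propIndicator]

theorem pi_toMeasure_occursDisjointly_le_sq (π : X → PMF Bool) :
    Measure.pi (fun x => (π x).toMeasure) {f | OccursDisjointly 𝒮 f f} ≤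
      Measure.pi (fun x => (π x).toMeasure) {f | Occurs 𝒮 f} ^ 2 := by
  have htotal : ∑ g, prodWeight (fun x => π x) g = 1 := by
    simpa [propIndicator] using (pi_toMeasure_setOf_eq_sum π fun _ => True).symm
  simpa only [pi_toMeasure_setOf_eq_sum, htotal, mul_one] using
    sum_prodWeight_occursDisjointly_mul_le (fun x => π x) 𝒮

end BergKesten

section Chunk

variable {X : Type*} [MetricSpace X] {Q : ℝ}

theorem IsChunk.mono {ε ε' : Set X} (h : ε ⊆ ε') :
    ∀ {n : ℕ} {C : Set X}, IsChunk Q ε n C → IsChunk Q ε' n C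
  | 0, _, ⟨x, hx, hC⟩ => ⟨x, h hx, hC⟩
  | _ + 1, _, ⟨A, B, hA, hB, hAB, hC, hdiam⟩ => ⟨A, B, hA.mono h, hB.mono h, hAB, hC, hdiam⟩

theorem IsChunk.subset {ε : Set X} : ∀ {n : ℕ} {C : Set X}, IsChunk Q ε n C → C ⊆ ε
  | 0, _, ⟨_, hx, hC⟩ => hC ▸ Set.singleton_subset_iff.2 hx
  | _ + 1, _, ⟨_, _, hA, hB, _, hC, _⟩ => hC ▸ Set.union_subset hA.subset hB.subset

theorem IsChunk.self {ε : Set X} : ∀ {n : ℕ} {C : Set X}, IsChunk Q ε n C → IsChunk Q C n C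
  | 0, _, ⟨x, _, hC⟩ => ⟨x, hC ▸ rfl, hC⟩
  | _ + 1, _, ⟨A, B, hA, hB, hAB, hC, hdiam⟩ =>
    ⟨A, B, hA.self.mono (hC ▸ Set.subset_union_left), hB.self.mono (hC ▸ Set.subset_union_right),
      hAB, hC, hdiam⟩

theorem isChunk_iff_self_and_subset {ε : Set X} {n : ℕ} {C : Set X} :
    IsChunk Q ε n C ↔ IsChunk Q C n C ∧ C ⊆ ε :=
  ⟨fun h => ⟨h.self, h.subset⟩, fun h => h.1.mono h.2⟩

theorem exists_isChunk_subset_iff_occurs {f : X → Bool} {n : ℕ} {B : Set X} :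
    (∃ C, IsChunk Q {x | f x = true} n C ∧ C ⊆ B) ↔ Occurs {C | IsChunk Q C n C ∧ C ⊆ B} f := by
  simp only [isChunk_iff_self_and_subset (ε := {x | f x = true}), Occurs, Set.mem_ofPred_eq]
  exact exists_congr fun C => by tauto

theorem exists_disjoint_isChunk_subset_iff_occursDisjointly {f : X → Bool} {n : ℕ} {B : Set X} :
    (∃ C₁ C₂, IsChunk Q {x | f x = true} n C₁ ∧ IsChunk Q {x | f x = true} n C₂ ∧
        Disjoint C₁ C₂ ∧ C₁ ⊆ B ∧ C₂ ⊆ B) ↔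
      OccursDisjointly {C | IsChunk Q C n C ∧ C ⊆ B} f f := by
  simp only [isChunk_iff_self_and_subset (ε := {x | f x = true}), OccursDisjointly,
    Set.mem_ofPred_eq]
  exact ⟨fun ⟨C₁, C₂, h₁, h₂, hd, hB₁, hB₂⟩ => ⟨C₁, ⟨h₁.1, hB₁⟩, C₂, ⟨h₂.1, hB₂⟩, hd, h₁.2, h₂.2⟩,
    fun ⟨C₁, h₁, C₂, h₂, hd, hf₁, hf₂⟩ => ⟨C₁, C₂, ⟨h₁.1, hf₁⟩, ⟨h₂.1, hf₂⟩, hd, h₁.2, h₂.2⟩⟩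

end Chunk

theorem statement5_general {X : Type*} [MetricSpace X] [Fintype X] (Q p : ℝ)
    (n : ℕ) (B : Set X) :
    bernoulliProduct X p
      {f | ∃ C₁ C₂ : Set X, IsChunk Q {x | f x = true} n C₁ ∧
        IsChunk Q {x | f x = true} n C₂ ∧ Disjoint C₁ C₂ ∧ C₁ ⊆ B ∧ C₂ ⊆ B} ≤
    (bernoulliProduct X p {f | ∃ C : Set X, IsChunk Q {x | f x = true} n C ∧ C ⊆ B}) ^ 2 := by
  classical
  simpa only [bernoulliProduct, exists_isChunk_subset_iff_occurs,
    exists_disjoint_isChunk_subset_iff_occursDisjointly] using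
    pi_toMeasure_occursDisjointly_le_sq {C | IsChunk Q C n C ∧ C ⊆ B} _

theorem statement5 {X : Type*} [MetricSpace X] [Fintype X] (Q p : ℝ) (hQ : 6 ≤ Q)
    (hp0 : 0 ≤ p) (hp1 : p ≤ 1) (n : ℕ) (B : Set X) :
    bernoulliProduct X p
      {f | ∃ C₁ C₂ : Set X, IsChunk Q {x | f x = true} n C₁ ∧
        IsChunk Q {x | f x = true} n C₂ ∧ Disjoint C₁ C₂ ∧ C₁ ⊆ B ∧ C₂ ⊆ B} ≤
    (bernoulliProduct X p {f | ∃ C : Set X, IsChunk Q {x | f x = true} n C ∧ C ⊆ B}) ^ 2 :=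
  statement5_general Q p n B
end

section
/- Fix constants d₀ ≥ 1, c_B ≥ 1, s ≥ 1, C > 0, k ≥ 0, c_D ≥ 1 and Q ≥ 6, and set λ = (2Q)^{d₀} c_B, β = log_Q 2 and α = c_D^{−β}. For each integer L ≥ c_D let (X_L, d_L) be a finite metric space with |X_L| ≤ C·L^k such that: (a) for every v ∈ X_L and all radii 0 < r < R there exists U ⊆ X_L with |U| ≤ c_B (R/r)^{d₀} and B_v(R) ⊆ ⋃_{u∈U} B_u(r); and (b) every ball of radius 1/2 in X_L contains at most s points. Let ε_L be a random subset of X_L in which each point is included independently with probability p, and let m*(L) = ⌈log_Q(L/c_D)⌉. If λ² s p < 1, then the probability that ε_L contains a level-m*(L) chunk is at most λ^{−2} · C·L^k · (λ² s p)^{α L^β}, and this probability tends to 0 as L → ∞. -/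
/-!
A first-moment bound. A level-`n` chunk has `2 ^ n` points, so it lies in `ε` with probability
`p ^ 2 ^ n`, and it suffices to count chunks. A level-`(n+1)` chunk meeting `B_v(Q^(n+1)/2)` has
diameter at most `Q^(n+1)/2`, so it lies in `B_v(Q^(n+1))`; covering that ball by `λ` balls of
radius `Q^n/2`, each of its two halves meets one of them. Hence the maximal number `N n` of
level-`n` chunks meeting a ball of radius `Q^n/2` satisfies `N 0 ≤ s` and `N (n+1) ≤ (λ N n)^2`,
i.e. `λ² N n ≤ (λ² s)^(2^n)`. Finally `2 ^ m*(L) ≥ (L/c_D)^β = α L^β`, and since `λ² s p < 1`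
the bound decays like `exp (-c L^β)`, which beats the polynomial factor `C L^k`.
-/

open scoped ENNReal

open Metric Filter Topology Finset

section

variable {Y : Type*} [MetricSpace Y] {Q : ℝ} {ε : Set Y}

namespace IsChunk

lemma subset_s9 : ∀ {n : ℕ} {T : Set Y}, IsChunk Q ε n T → T ⊆ ε
  | 0, _, ⟨_, hx, rfl⟩ => Set.singleton_subset_iff.2 hx
  | _ + 1, _, ⟨_, _, hA, hB, _, rfl, _⟩ => Set.union_subset hA.subset_s9 hB.subset_s9

lemma mono_s9 {ε' : Set Y} (h : ε ⊆ ε') :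
    ∀ {n : ℕ} {T : Set Y}, IsChunk Q ε n T → IsChunk Q ε' n T
  | 0, _, ⟨x, hx, hT⟩ => ⟨x, h hx, hT⟩
  | _ + 1, _, ⟨A, B, hA, hB, hAB, hT, hdiam⟩ => ⟨A, B, hA.mono_s9 h, hB.mono_s9 h, hAB, hT, hdiam⟩

lemma finite : ∀ {n : ℕ} {T : Set Y}, IsChunk Q ε n T → T.Finite
  | 0, _, ⟨x, _, rfl⟩ => Set.finite_singleton x
  | _ + 1, _, ⟨_, _, hA, hB, _, rfl, _⟩ => hA.finite.union hB.finite

lemma ncard_eq : ∀ {n : ℕ} {T : Set Y}, IsChunk Q ε n T → T.ncard = 2 ^ n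
  | 0, _, ⟨_, _, rfl⟩ => Set.ncard_singleton _
  | n + 1, _, ⟨_, _, hA, hB, hAB, rfl, _⟩ => by
      rw [Set.ncard_union_eq hAB hA.finite hB.finite, hA.ncard_eq, hB.ncard_eq, pow_succ, mul_two]

lemma nonempty {n : ℕ} {T : Set Y} (h : IsChunk Q ε n T) : T.Nonempty := by
  rw [← Set.ncard_pos h.finite, h.ncard_eq]
  positivity

end IsChunk

lemma Bornology.IsBounded.subset_ball_add_diam {α : Type*} [PseudoMetricSpace α] {S : Set α}
    {v : α} {r : ℝ}
    (hS : Bornology.IsBounded S) (hmeet : (S ∩ ball v r).Nonempty) :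
    S ⊆ ball v (r + diam S) := by
  obtain ⟨w, hwS, hwv⟩ := hmeet
  intro x hx
  rw [mem_ball] at hwv ⊢
  calc dist x v ≤ dist x w + dist w v := dist_triangle x w v
    _ < r + diam S := by linarith [dist_le_diam_of_mem hS hx hwS]

section Counting

open Classical

variable (Y) in
noncomputable def chunks [Fintype Y] (Q : ℝ) (n : ℕ) : Finset (Set Y) :=
  univ.filter (IsChunk Q Set.univ n)

variable [Fintype Y]

@[simp]
lemma mem_chunks {n : ℕ} {T : Set Y} : T ∈ chunks Y Q n ↔ IsChunk Q Set.univ n T := by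
  simp [chunks]

theorem card_chunks_inter_ball_le {lam s : ℝ} (hlam : 0 < lam) (hs : 0 ≤ s)
    (hcov : ∀ (n : ℕ) (v : Y), ∃ U : Finset Y, (#U : ℝ) ≤ lam ∧
      ball v (Q ^ (n + 1)) ⊆ ⋃ u ∈ U, ball u (Q ^ n / 2))
    (hball : ∀ v : Y, ((ball v (1 / 2 : ℝ)).ncard : ℝ) ≤ s) (n : ℕ) (v : Y) :
    (#{T ∈ chunks Y Q n | (T ∩ ball v (Q ^ n / 2)).Nonempty} : ℝ) ≤
      (lam ^ 2 * s) ^ 2 ^ n / lam ^ 2 := by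
  induction n generalizing v with
  | zero =>
    have hsub : {T ∈ chunks Y Q 0 | (T ∩ ball v (Q ^ 0 / 2)).Nonempty} ⊆
        (ball v (1 / 2 : ℝ)).toFinset.image ({·}) := by
      intro T hT
      obtain ⟨⟨x, -, rfl⟩, hx⟩ := by simpa using hT
      simpa using hx
    calc (#{T ∈ chunks Y Q 0 | (T ∩ ball v (Q ^ 0 / 2)).Nonempty} : ℝ)
        ≤ #((ball v (1 / 2 : ℝ)).toFinset) := by
          exact_mod_cast (card_le_card hsub).trans card_image_le
      _ ≤ s := by rw [← Set.ncard_eq_toFinset_card']; exact hball v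
      _ = (lam ^ 2 * s) ^ 2 ^ 0 / lam ^ 2 := by field_simp; ring
  | succ n ih =>
    obtain ⟨U, hU, hUcov⟩ := hcov n v
    set G := U.biUnion fun u => {T ∈ chunks Y Q n | (T ∩ ball u (Q ^ n / 2)).Nonempty}
    have hmemG : ∀ A, IsChunk Q Set.univ n A → A ⊆ ball v (Q ^ (n + 1)) → A ∈ G := by
      intro A hA hAv
      obtain ⟨a, ha⟩ := hA.nonempty
      obtain ⟨u, hu, hau⟩ := Set.mem_iUnion₂.1 (hUcov (hAv ha))
      exact mem_biUnion.2 ⟨u, hu, by simpa using ⟨hA, a, ha, hau⟩⟩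
    have hsub : {T ∈ chunks Y Q (n + 1) | (T ∩ ball v (Q ^ (n + 1) / 2)).Nonempty} ⊆
        (G ×ˢ G).image fun P => P.1 ∪ P.2 := by
      intro T hT
      obtain ⟨⟨A, B, hA, hB, -, rfl, hdiam⟩, hmeet⟩ := by simpa using hT
      have hTv : A ∪ B ⊆ ball v (Q ^ (n + 1)) :=
        ((hA.finite.union hB.finite).isBounded.subset_ball_add_diam hmeet).trans
          (ball_subset_ball (by linarith))
      exact mem_image.2 ⟨(A, B), mem_product.2
        ⟨hmemG A hA (Set.subset_union_left.trans hTv),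
          hmemG B hB (Set.subset_union_right.trans hTv)⟩, rfl⟩
    have hG : (#G : ℝ) ≤ (lam ^ 2 * s) ^ 2 ^ n / lam := by
      calc (#G : ℝ)
          ≤ ∑ u ∈ U, (#{T ∈ chunks Y Q n | (T ∩ ball u (Q ^ n / 2)).Nonempty} : ℝ) := by
            exact_mod_cast card_biUnion_le
        _ ≤ #U * ((lam ^ 2 * s) ^ 2 ^ n / lam ^ 2) := by
            simpa using sum_le_sum fun u _ => ih u
        _ ≤ lam * ((lam ^ 2 * s) ^ 2 ^ n / lam ^ 2) := by gcongr
        _ = (lam ^ 2 * s) ^ 2 ^ n / lam := by field_simp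
    calc (#{T ∈ chunks Y Q (n + 1) | (T ∩ ball v (Q ^ (n + 1) / 2)).Nonempty} : ℝ)
        ≤ #G * #G := by
          exact_mod_cast ((card_le_card hsub).trans card_image_le).trans_eq (card_product G G)
      _ ≤ ((lam ^ 2 * s) ^ 2 ^ n / lam) * ((lam ^ 2 * s) ^ 2 ^ n / lam) := by gcongr
      _ = (lam ^ 2 * s) ^ 2 ^ (n + 1) / lam ^ 2 := by rw [pow_succ 2 n, pow_mul]; field_simp

theorem card_chunks_le {lam s : ℝ} (hQ : 0 < Q) (hlam : 0 < lam) (hs : 0 ≤ s)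
    (hcov : ∀ (n : ℕ) (v : Y), ∃ U : Finset Y, (#U : ℝ) ≤ lam ∧
      ball v (Q ^ (n + 1)) ⊆ ⋃ u ∈ U, ball u (Q ^ n / 2))
    (hball : ∀ v : Y, ((ball v (1 / 2 : ℝ)).ncard : ℝ) ≤ s) (n : ℕ) :
    (#(chunks Y Q n) : ℝ) ≤ Fintype.card Y * ((lam ^ 2 * s) ^ 2 ^ n / lam ^ 2) := by
  have hsub : chunks Y Q n ⊆
      univ.biUnion fun v => {T ∈ chunks Y Q n | (T ∩ ball v (Q ^ n / 2)).Nonempty} := by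
    intro T hT
    obtain ⟨v, hv⟩ := (mem_chunks.1 hT).nonempty
    exact mem_biUnion.2
      ⟨v, mem_univ v, mem_filter.2 ⟨hT, v, hv, mem_ball_self (by positivity)⟩⟩
  calc (#(chunks Y Q n) : ℝ)
      ≤ ∑ v, (#{T ∈ chunks Y Q n | (T ∩ ball v (Q ^ n / 2)).Nonempty} : ℝ) := by
        exact_mod_cast (card_le_card hsub).trans card_biUnion_le
    _ ≤ Fintype.card Y * ((lam ^ 2 * s) ^ 2 ^ n / lam ^ 2) := by
        refine (sum_le_sum fun v _ => card_chunks_inter_ball_le hlam hs hcov hball n v).trans_eq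
          ?_
        rw [sum_const, card_univ, nsmul_eq_mul]

end Counting

lemma bernoulliProduct_forall_mem_true {Z : Type*} [Fintype Z] {p : ℝ} (hp1 : p ≤ 1)
    (T : Set Z) :
    bernoulliProduct Z p {f | ∀ x ∈ T, f x = true} = ENNReal.ofReal p ^ T.ncard := by
  classical
  have hset : {f : Z → Bool | ∀ x ∈ T, f x = true} =
      Set.univ.pi fun x => if x ∈ T then {true} else Set.univ := by
    ext f
    simp only [Set.mem_ofPred_eq, Set.mem_pi, Set.mem_univ, true_implies]
    refine forall_congr' fun x => ?_
    split_ifs with hx <;> simp [hx]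
  have hfactor (x : Z) :
      (PMF.bernoulli (min (Real.toNNReal p) 1) (min_le_right _ _)).toMeasure
        (if x ∈ T then {true} else Set.univ) = if x ∈ T then ENNReal.ofReal p else 1 := by
    split_ifs
    · rw [PMF.toMeasure_apply_singleton _ _ (measurableSet_singleton _)]
      simp [PMF.bernoulli, min_eq_left (Real.toNNReal_le_one.2 hp1), ENNReal.ofReal]
    · exact MeasureTheory.measure_univ
  rw [bernoulliProduct, hset, MeasureTheory.Measure.pi_pi]
  simp_rw [hfactor, ← Set.mem_toFinset (s := T)]
  rw [prod_ite_mem, univ_inter, prod_const, Set.ncard_eq_toFinset_card']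

lemma bernoulliProduct_exists_chunk_le [Fintype Y] {p : ℝ} (hp1 : p ≤ 1) (n : ℕ) :
    bernoulliProduct Y p {f | ∃ T, IsChunk Q {x | f x = true} n T} ≤
      #(chunks Y Q n) * ENNReal.ofReal p ^ 2 ^ n := by
  have hevent : {f : Y → Bool | ∃ T, IsChunk Q {x | f x = true} n T} ⊆
      ⋃ T ∈ chunks Y Q n, {f | ∀ x ∈ T, f x = true} := by
    rintro f ⟨T, hT⟩
    exact Set.mem_biUnion (mem_chunks.2 (hT.mono_s9 (Set.subset_univ _))) fun x hx => hT.subset_s9 hx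
  calc bernoulliProduct Y p {f | ∃ T, IsChunk Q {x | f x = true} n T}
      ≤ ∑ T ∈ chunks Y Q n, bernoulliProduct Y p {f | ∀ x ∈ T, f x = true} :=
        (MeasureTheory.measure_mono hevent).trans (MeasureTheory.measure_biUnion_finset_le _ _)
    _ = ∑ T ∈ chunks Y Q n, ENNReal.ofReal p ^ 2 ^ n := by
        refine sum_congr rfl fun T hT => ?_
        rw [bernoulliProduct_forall_mem_true hp1, (mem_chunks.1 hT).ncard_eq]
    _ = #(chunks Y Q n) * ENNReal.ofReal p ^ 2 ^ n := by rw [sum_const, nsmul_eq_mul]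

theorem bernoulliProduct_exists_chunk_le_ofReal [Fintype Y] {lam s p : ℝ} (hQ : 0 < Q)
    (hlam : 0 < lam) (hs : 0 ≤ s) (hp0 : 0 ≤ p) (hp1 : p ≤ 1)
    (hcov : ∀ (n : ℕ) (v : Y), ∃ U : Finset Y, (#U : ℝ) ≤ lam ∧
      ball v (Q ^ (n + 1)) ⊆ ⋃ u ∈ U, ball u (Q ^ n / 2))
    (hball : ∀ v : Y, ((ball v (1 / 2 : ℝ)).ncard : ℝ) ≤ s) (n : ℕ) :
    bernoulliProduct Y p {f | ∃ T, IsChunk Q {x | f x = true} n T} ≤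
      ENNReal.ofReal ((lam ^ 2)⁻¹ * Fintype.card Y * (lam ^ 2 * s * p) ^ 2 ^ n) := by
  refine (bernoulliProduct_exists_chunk_le hp1 n).trans ?_
  rw [← ENNReal.ofReal_natCast, ← ENNReal.ofReal_pow hp0, ← ENNReal.ofReal_mul (by positivity)]
  refine ENNReal.ofReal_le_ofReal ?_
  calc (#(chunks Y Q n) : ℝ) * p ^ 2 ^ n
      ≤ Fintype.card Y * ((lam ^ 2 * s) ^ 2 ^ n / lam ^ 2) * p ^ 2 ^ n := by
        gcongr; exact card_chunks_le hQ hlam hs hcov hball n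
    _ = (lam ^ 2)⁻¹ * Fintype.card Y * (lam ^ 2 * s * p) ^ 2 ^ n := by rw [mul_pow]; ring

lemma exists_finset_ball_pow_succ_subset_iUnion_ball {c_B d₀ : ℝ} (hQ : 1 / 2 < Q)
    (hcover : ∀ (v : Y) (r R : ℝ), 0 < r → r < R →
      ∃ U : Finset Y, (#U : ℝ) ≤ c_B * (R / r) ^ d₀ ∧ ball v R ⊆ ⋃ u ∈ U, ball u r)
    (n : ℕ) (v : Y) :
    ∃ U : Finset Y, (#U : ℝ) ≤ (2 * Q) ^ d₀ * c_B ∧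
      ball v (Q ^ (n + 1)) ⊆ ⋃ u ∈ U, ball u (Q ^ n / 2) := by
  have hQn : 0 < Q ^ n := pow_pos (by linarith) n
  obtain ⟨U, hU, hcov⟩ := hcover v (Q ^ n / 2) (Q ^ (n + 1)) (by positivity)
    (by rw [pow_succ]; nlinarith)
  refine ⟨U, ?_, hcov⟩
  have hratio : Q ^ (n + 1) / (Q ^ n / 2) = 2 * Q := by field_simp; ring
  rwa [hratio, mul_comm] at hU

lemma rpow_neg_logb_mul_rpow_logb_le_two_pow_ceil {c x : ℝ} (hQ : 1 < Q) (hc : 0 < c)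
    (hx : 0 < x) :
    c ^ (-Real.logb Q 2) * x ^ Real.logb Q 2 ≤ 2 ^ ⌈Real.logb Q (x / c)⌉₊ := by
  have hQ0 : 0 < Q := by linarith
  have hxc : 0 < x / c := div_pos hx hc
  have hswap : (x / c) ^ Real.logb Q 2 = 2 ^ Real.logb Q (x / c) := by
    conv_lhs => rw [← Real.rpow_logb hQ0 hQ.ne' hxc]
    conv_rhs => rw [← Real.rpow_logb hQ0 hQ.ne' two_pos]
    rw [← Real.rpow_mul hQ0.le, ← Real.rpow_mul hQ0.le, mul_comm]
  rw [Real.rpow_neg hc.le, ← Real.inv_rpow hc.le, ← Real.mul_rpow (by positivity) hx.le,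
    inv_mul_eq_div, hswap, ← Real.rpow_natCast]
  exact Real.rpow_le_rpow_of_exponent_le one_le_two (Nat.le_ceil _)

lemma tendsto_rpow_mul_rpow_mul_rpow_atTop_nhds_zero (k : ℝ) {a b β : ℝ} (ha : 0 < a)
    (hβ : 0 < β) (hb0 : 0 ≤ b) (hb1 : b < 1) :
    Tendsto (fun x : ℝ => x ^ k * b ^ (a * x ^ β)) atTop (𝓝 0) := by
  rcases hb0.eq_or_lt with rfl | hb0
  · refine tendsto_const_nhds.congr' ?_
    filter_upwards [eventually_gt_atTop 0] with x hx
    rw [Real.zero_rpow (by positivity), mul_zero]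
  have hc : 0 < a * -Real.log b := mul_pos ha (neg_pos.2 (Real.log_neg hb0 hb1))
  refine ((tendsto_rpow_mul_exp_neg_mul_atTop_nhds_zero (k / β) _ hc).comp
    (tendsto_rpow_atTop hβ)).congr' ?_
  filter_upwards [eventually_gt_atTop 0] with x hx
  rw [Function.comp_apply, ← Real.rpow_mul hx.le, mul_div_cancel₀ k hβ.ne',
    Real.rpow_def_of_pos hb0]
  ring_nf

end

theorem statement9_general (d₀ c_B s C k c_D Q p : ℝ)
    (hcB : 1 ≤ c_B) (hs : 1 ≤ s)
    (hcD : 1 ≤ c_D) (hQ : 6 ≤ Q) (hp0 : 0 ≤ p) (hp1 : p ≤ 1)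
    (lam β α : ℝ) (hlam : lam = (2 * Q) ^ d₀ * c_B)
    (hβ : β = Real.logb Q 2) (hα : α = c_D ^ (-β))
    (X : ℕ → Type*) [∀ L, MetricSpace (X L)] [∀ L, Fintype (X L)]
    (hcard : ∀ L : ℕ, c_D ≤ L → (Fintype.card (X L) : ℝ) ≤ C * (L : ℝ) ^ k)
    (hcover : ∀ L : ℕ, c_D ≤ L → ∀ (v : X L) (r R : ℝ), 0 < r → r < R →
      ∃ U : Finset (X L), (U.card : ℝ) ≤ c_B * (R / r) ^ d₀ ∧
        Metric.ball v R ⊆ ⋃ u ∈ U, Metric.ball (u : X L) r)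
    (hball : ∀ L : ℕ, c_D ≤ L → ∀ v : X L, ((Metric.ball v (1 / 2 : ℝ)).ncard : ℝ) ≤ s)
    (mStar : ℕ → ℕ) (hmStar : ∀ L : ℕ, mStar L = ⌈Real.logb Q ((L : ℝ) / c_D)⌉₊)
    (hsub : lam ^ 2 * s * p < 1) :
    (∀ L : ℕ, c_D ≤ L →
      bernoulliProduct (X L) p
        {f | ∃ Ch : Set (X L), IsChunk Q {x | f x = true} (mStar L) Ch} ≤
      ENNReal.ofReal ((lam ^ 2)⁻¹ * (C * (L : ℝ) ^ k) *
        (lam ^ 2 * s * p) ^ (α * (L : ℝ) ^ β))) ∧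
    Filter.Tendsto (fun L : ℕ =>
      bernoulliProduct (X L) p
        {f | ∃ Ch : Set (X L), IsChunk Q {x | f x = true} (mStar L) Ch})
      Filter.atTop (nhds 0) := by
  have hQ1 : 1 < Q := by linarith
  have hlam0 : 0 < lam := hlam ▸ mul_pos (Real.rpow_pos_of_pos (by linarith) _) (by linarith)
  have hβ0 : 0 < β := hβ ▸ Real.logb_pos hQ1 one_lt_two
  have hα0 : 0 < α := hα ▸ Real.rpow_pos_of_pos (by linarith) _
  have hb0 : 0 ≤ lam ^ 2 * s * p := by positivity
  have hbound (L : ℕ) (hL : c_D ≤ L) :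
      bernoulliProduct (X L) p {f | ∃ Ch, IsChunk Q {x | f x = true} (mStar L) Ch} ≤
        ENNReal.ofReal ((lam ^ 2)⁻¹ * (C * (L : ℝ) ^ k) *
          (lam ^ 2 * s * p) ^ (α * (L : ℝ) ^ β)) := by
    have hexp : α * (L : ℝ) ^ β ≤ 2 ^ mStar L := by
      rw [hα, hβ, hmStar]
      exact rpow_neg_logb_mul_rpow_logb_le_two_pow_ceil hQ1 (by linarith) (by linarith)
    refine (bernoulliProduct_exists_chunk_le_ofReal (by linarith) hlam0 (by linarith) hp0 hp1
      (hlam ▸ exists_finset_ball_pow_succ_subset_iUnion_ball (by linarith) (hcover L hL))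
      (hball L hL) (mStar L)).trans (ENNReal.ofReal_le_ofReal ?_)
    have hpow : (lam ^ 2 * s * p) ^ 2 ^ mStar L ≤ (lam ^ 2 * s * p) ^ (α * (L : ℝ) ^ β) := by
      rw [← Real.rpow_natCast, Nat.cast_pow, Nat.cast_ofNat]
      exact Real.rpow_le_rpow_of_exponent_ge' hb0 hsub.le (by positivity) hexp
    calc (lam ^ 2)⁻¹ * Fintype.card (X L) * (lam ^ 2 * s * p) ^ 2 ^ mStar L
        ≤ (lam ^ 2)⁻¹ * Fintype.card (X L) * (lam ^ 2 * s * p) ^ (α * (L : ℝ) ^ β) := by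
          gcongr
      _ ≤ (lam ^ 2)⁻¹ * (C * (L : ℝ) ^ k) * (lam ^ 2 * s * p) ^ (α * (L : ℝ) ^ β) := by
          gcongr; exact hcard L hL
  have hlim : Tendsto (fun L : ℕ => (lam ^ 2)⁻¹ * (C * (L : ℝ) ^ k) *
      (lam ^ 2 * s * p) ^ (α * (L : ℝ) ^ β)) atTop (𝓝 0) := by
    simpa [mul_assoc] using ((tendsto_rpow_mul_rpow_mul_rpow_atTop_nhds_zero k hα0 hβ0 hb0
      hsub).comp tendsto_natCast_atTop_atTop).const_mul ((lam ^ 2)⁻¹ * C)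
  refine ⟨hbound, tendsto_of_tendsto_of_tendsto_of_le_of_le' tendsto_const_nhds
    (ENNReal.ofReal_zero ▸ ENNReal.tendsto_ofReal hlim) (.of_forall fun _ => zero_le) ?_⟩
  filter_upwards [eventually_ge_atTop ⌈c_D⌉₊] with L hL
  exact hbound L (Nat.ceil_le.1 hL)

theorem statement9 (d₀ c_B s C k c_D Q p : ℝ)
    (hd : 1 ≤ d₀) (hcB : 1 ≤ c_B) (hs : 1 ≤ s) (hC : 0 < C) (hk : 0 ≤ k)
    (hcD : 1 ≤ c_D) (hQ : 6 ≤ Q) (hp0 : 0 ≤ p) (hp1 : p ≤ 1)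
    (lam β α : ℝ) (hlam : lam = (2 * Q) ^ d₀ * c_B)
    (hβ : β = Real.logb Q 2) (hα : α = c_D ^ (-β))
    (X : ℕ → Type*) [∀ L, MetricSpace (X L)] [∀ L, Fintype (X L)]
    (hcard : ∀ L : ℕ, c_D ≤ L → (Fintype.card (X L) : ℝ) ≤ C * (L : ℝ) ^ k)
    (hcover : ∀ L : ℕ, c_D ≤ L → ∀ (v : X L) (r R : ℝ), 0 < r → r < R →
      ∃ U : Finset (X L), (U.card : ℝ) ≤ c_B * (R / r) ^ d₀ ∧
        Metric.ball v R ⊆ ⋃ u ∈ U, Metric.ball (u : X L) r)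
    (hball : ∀ L : ℕ, c_D ≤ L → ∀ v : X L, ((Metric.ball v (1 / 2 : ℝ)).ncard : ℝ) ≤ s)
    (mStar : ℕ → ℕ) (hmStar : ∀ L : ℕ, mStar L = ⌈Real.logb Q ((L : ℝ) / c_D)⌉₊)
    (hsub : lam ^ 2 * s * p < 1) :
    (∀ L : ℕ, c_D ≤ L →
      bernoulliProduct (X L) p
        {f | ∃ Ch : Set (X L), IsChunk Q {x | f x = true} (mStar L) Ch} ≤
      ENNReal.ofReal ((lam ^ 2)⁻¹ * (C * (L : ℝ) ^ k) *
        (lam ^ 2 * s * p) ^ (α * (L : ℝ) ^ β))) ∧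
    Filter.Tendsto (fun L : ℕ =>
      bernoulliProduct (X L) p
        {f | ∃ Ch : Set (X L), IsChunk Q {x | f x = true} (mStar L) Ch})
      Filter.atTop (nhds 0) :=
  statement9_general d₀ c_B s C k c_D Q p hcB hs hcD hQ hp0 hp1 lam β α hlam hβ hα X hcard hcover
    hball mStar hmStar hsub
end

section
/- The relation ⪯ is a partial order on V (reflexive, antisymmetric and transitive), and moreover (V, ⪯) is a lattice: every pair of elements u, w ∈ V has a least upper bound sup(u,w) and a greatest lower bound inf(u,w) with respect to ⪯. -/
/-!
The pair-sum map `v ↦ (v₁ + v₂, v₁ + v₃, v₂ + v₃)` is injective, maps the bcc lattice onto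
`(2ℤ)³`, and sends the steps `(1,1,-1)`, `(1,-1,1)`, `(-1,1,1)` to `2e₁`, `2e₂`, `2e₃` and the
other four steps into the positive orthant. Hence the causal cone is the set of bcc vectors with
nonnegative pair sums, and on the bcc lattice `⪯` becomes the componentwise order on `(2ℤ)³`,
which is a lattice because the maximum and minimum of even integers are even.
-/

/-- The vertex set of the body-centered cubic lattice:
integer triples whose coordinates all have the same parity. -/
def bccVertices : Set (ℤ × ℤ × ℤ) :=
  {v | v.1 ≡ v.2.1 [ZMOD 2] ∧ v.2.1 ≡ v.2.2 [ZMOD 2]}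

/-- The causal steps of the bcc lattice with respect to the sweep direction `t = (1,1,1)`:
the edge vectors having positive inner product with `t`. -/
def causalSteps : Set (ℤ × ℤ × ℤ) :=
  {(2, 0, 0), (0, 2, 0), (0, 0, 2), (1, 1, 1), (1, 1, -1), (1, -1, 1), (-1, 1, 1)}

/-- `u ⪯ w` iff `w - u` is a finite sum (with repetitions allowed, possibly empty)
of causal steps, i.e. `w - u` lies in the additive submonoid generated by them. -/
def sweepLE (u w : ℤ × ℤ × ℤ) : Prop :=
  w - u ∈ AddSubmonoid.closure causalSteps

section OrderFromSubmonoid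

variable {G : Type*} [AddGroup G] {S : AddSubmonoid G}

theorem sub_self_mem_addSubmonoid (u : G) : u - u ∈ S := by
  simp

theorem sub_mem_addSubmonoid_trans {u v w : G} (huv : v - u ∈ S) (hvw : w - v ∈ S) : w - u ∈ S := by
  simpa using S.add_mem hvw huv

end OrderFromSubmonoid

theorem exists_lub_of_le_iff_comap {α β : Type*} [SemilatticeSup β] {s : Set α}
    {r : α → α → Prop} (f : α → β) (hr : ∀ u ∈ s, ∀ w ∈ s, r u w ↔ f u ≤ f w)
    (hsup : ∀ u ∈ s, ∀ w ∈ s, ∃ z ∈ s, f z = f u ⊔ f w) :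
    ∀ u ∈ s, ∀ w ∈ s, ∃ z ∈ s, r u z ∧ r w z ∧ ∀ y ∈ s, r u y → r w y → r z y := by
  intro u hu w hw
  obtain ⟨z, hz, hfz⟩ := hsup u hu w hw
  refine ⟨z, hz, (hr u hu z hz).2 (hfz ▸ le_sup_left), (hr w hw z hz).2 (hfz ▸ le_sup_right),
    fun y hy huy hwy => (hr z hz y hy).2 ?_⟩
  rw [hfz]
  exact sup_le ((hr u hu y hy).1 huy) ((hr w hw y hy).1 hwy)

theorem exists_glb_of_le_iff_comap {α β : Type*} [SemilatticeInf β] {s : Set α}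
    {r : α → α → Prop} (f : α → β) (hr : ∀ u ∈ s, ∀ w ∈ s, r u w ↔ f u ≤ f w)
    (hinf : ∀ u ∈ s, ∀ w ∈ s, ∃ z ∈ s, f z = f u ⊓ f w) :
    ∀ u ∈ s, ∀ w ∈ s, ∃ z ∈ s, r z u ∧ r z w ∧ ∀ y ∈ s, r y u → r y w → r y z :=
  exists_lub_of_le_iff_comap (r := fun u w => r w u) (OrderDual.toDual ∘ f)
    (fun u hu w hw => hr w hw u hu) hinf

def pairSums : ℤ × ℤ × ℤ →+ ℤ × ℤ × ℤ where
  toFun v := (v.1 + v.2.1, v.1 + v.2.2, v.2.1 + v.2.2)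
  map_zero' := rfl
  map_add' u v := by ext <;> simp only [Prod.fst_add, Prod.snd_add] <;> ring

@[simp]
theorem pairSums_apply (v : ℤ × ℤ × ℤ) :
    pairSums v = (v.1 + v.2.1, v.1 + v.2.2, v.2.1 + v.2.2) := rfl

theorem pairSums_injective : Function.Injective pairSums := by
  intro u w h
  simp only [pairSums_apply, Prod.mk.injEq] at h
  ext <;> omega

theorem mem_bccVertices_iff (v : ℤ × ℤ × ℤ) :
    v ∈ bccVertices ↔ v.1 % 2 = v.2.1 % 2 ∧ v.2.1 % 2 = v.2.2 % 2 := Iff.rfl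

theorem sub_mem_bccVertices {u w : ℤ × ℤ × ℤ} (hu : u ∈ bccVertices) (hw : w ∈ bccVertices) :
    w - u ∈ bccVertices := by
  rw [mem_bccVertices_iff] at *
  simp only [Prod.fst_sub, Prod.snd_sub]
  omega

theorem image_pairSums_bccVertices :
    pairSums '' bccVertices = {p | Even p.1 ∧ Even p.2.1 ∧ Even p.2.2} := by
  ext ⟨a, b, c⟩
  simp only [Set.mem_image, Set.mem_ofPred_eq, mem_bccVertices_iff, pairSums_apply,
    Prod.exists, Prod.mk.injEq, Int.even_iff]
  constructor
  · rintro ⟨x, y, z, hv, rfl, rfl, rfl⟩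
    omega
  · rintro ⟨ha, hb, hc⟩
    exact ⟨(a + b - c) / 2, (a - b + c) / 2, (-a + b + c) / 2, by omega, by omega, by omega,
      by omega⟩

theorem mem_closure_causalSteps_iff (d : ℤ × ℤ × ℤ) :
    d ∈ AddSubmonoid.closure causalSteps ↔ d ∈ bccVertices ∧ 0 ≤ pairSums d := by
  simp only [mem_bccVertices_iff, pairSums_apply, ← Prod.mk_zero_zero, Prod.mk_le_mk]
  constructor
  · intro h
    induction h using AddSubmonoid.closure_induction with
    | mem x hx =>
      simp only [causalSteps, Set.mem_insert_iff, Set.mem_singleton_iff] at hx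
      rcases hx with rfl | rfl | rfl | rfl | rfl | rfl | rfl <;> decide
    | zero => decide
    | add x y _ _ hx hy =>
      simp only [Prod.fst_add, Prod.snd_add]
      omega
  · rintro ⟨⟨h₁, h₂⟩, h₃, h₄, h₅⟩
    have hstep : ∀ s ∈ causalSteps, ∀ n : ℕ, n • s ∈ AddSubmonoid.closure causalSteps :=
      fun s hs n => nsmul_mem (AddSubmonoid.subset_closure hs) n
    have hd : d = ((d.1 + d.2.1) / 2).toNat • ((1, 1, -1) : ℤ × ℤ × ℤ)
        + ((d.1 + d.2.2) / 2).toNat • ((1, -1, 1) : ℤ × ℤ × ℤ)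
        + ((d.2.1 + d.2.2) / 2).toNat • ((-1, 1, 1) : ℤ × ℤ × ℤ) := by
      ext <;> simp only [Prod.fst_add, Prod.snd_add, Prod.smul_fst, Prod.smul_snd] <;>
        simp only [nsmul_eq_mul] <;> omega
    rw [hd]
    exact add_mem (add_mem (hstep _ (by simp [causalSteps]) _) (hstep _ (by simp [causalSteps]) _))
      (hstep _ (by simp [causalSteps]) _)

theorem sweepLE_iff (u w : ℤ × ℤ × ℤ) :
    sweepLE u w ↔ w - u ∈ bccVertices ∧ pairSums u ≤ pairSums w := by
  rw [sweepLE, mem_closure_causalSteps_iff, map_sub, sub_nonneg]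

theorem sweepLE_iff_of_mem {u w : ℤ × ℤ × ℤ} (hu : u ∈ bccVertices) (hw : w ∈ bccVertices) :
    sweepLE u w ↔ pairSums u ≤ pairSums w := by
  simp [sweepLE_iff, sub_mem_bccVertices hu hw]

theorem sweepLE_antisymm {u w : ℤ × ℤ × ℤ} (huw : sweepLE u w) (hwu : sweepLE w u) : u = w :=
  pairSums_injective (le_antisymm ((sweepLE_iff u w).1 huw).2 ((sweepLE_iff w u).1 hwu).2)

theorem even_max {a b : ℤ} (ha : Even a) (hb : Even b) : Even (max a b) := by
  rcases max_choice a b with h | h <;> rw [h] <;> assumption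

theorem even_min {a b : ℤ} (ha : Even a) (hb : Even b) : Even (min a b) := by
  rcases min_choice a b with h | h <;> rw [h] <;> assumption

theorem exists_pairSums_eq_sup {u w : ℤ × ℤ × ℤ} (hu : u ∈ bccVertices) (hw : w ∈ bccVertices) :
    ∃ z ∈ bccVertices, pairSums z = pairSums u ⊔ pairSums w := by
  have hu' := Set.mem_image_of_mem pairSums hu
  have hw' := Set.mem_image_of_mem pairSums hw
  rw [image_pairSums_bccVertices] at hu' hw'
  have : pairSums u ⊔ pairSums w ∈ pairSums '' bccVertices := by
    rw [image_pairSums_bccVertices]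
    exact ⟨even_max hu'.1 hw'.1, even_max hu'.2.1 hw'.2.1, even_max hu'.2.2 hw'.2.2⟩
  simpa only [Set.mem_image] using this

theorem exists_pairSums_eq_inf {u w : ℤ × ℤ × ℤ} (hu : u ∈ bccVertices) (hw : w ∈ bccVertices) :
    ∃ z ∈ bccVertices, pairSums z = pairSums u ⊓ pairSums w := by
  have hu' := Set.mem_image_of_mem pairSums hu
  have hw' := Set.mem_image_of_mem pairSums hw
  rw [image_pairSums_bccVertices] at hu' hw'
  have : pairSums u ⊓ pairSums w ∈ pairSums '' bccVertices := by
    rw [image_pairSums_bccVertices]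
    exact ⟨even_min hu'.1 hw'.1, even_min hu'.2.1 hw'.2.1, even_min hu'.2.2 hw'.2.2⟩
  simpa only [Set.mem_image] using this

theorem statement13 :
    (∀ u ∈ bccVertices, sweepLE u u) ∧
    (∀ u ∈ bccVertices, ∀ w ∈ bccVertices, sweepLE u w → sweepLE w u → u = w) ∧
    (∀ u ∈ bccVertices, ∀ v ∈ bccVertices, ∀ w ∈ bccVertices,
      sweepLE u v → sweepLE v w → sweepLE u w) ∧
    (∀ u ∈ bccVertices, ∀ w ∈ bccVertices, ∃ z ∈ bccVertices,
      sweepLE u z ∧ sweepLE w z ∧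
      ∀ y ∈ bccVertices, sweepLE u y → sweepLE w y → sweepLE z y) ∧
    (∀ u ∈ bccVertices, ∀ w ∈ bccVertices, ∃ z ∈ bccVertices,
      sweepLE z u ∧ sweepLE z w ∧
      ∀ y ∈ bccVertices, sweepLE y u → sweepLE y w → sweepLE y z) :=
  ⟨fun u _ => sub_self_mem_addSubmonoid u,
    fun _ _ _ _ => sweepLE_antisymm,
    fun _ _ _ _ _ _ => sub_mem_addSubmonoid_trans,
    exists_lub_of_le_iff_comap pairSums (fun _ hu _ hw => sweepLE_iff_of_mem hu hw)
      (fun _ hu _ hw => exists_pairSums_eq_sup hu hw),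
    exists_glb_of_le_iff_comap pairSums (fun _ hu _ hw => sweepLE_iff_of_mem hu hw)
      (fun _ hu _ hw => exists_pairSums_eq_inf hu hw)⟩
end
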